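/- Let 0 ≤ u < 1 and |δ_j| ≤ u for j = k+1,...,n. If additionally |Σ_{j=k+1}^n δ_j| ≤ λ√n u for some λ ≥ 0, then |Π_{j=k+1}^n (1+δ_j) - 1| ≤ exp((λ√n u + n u²)/(1-u)) - 1. -/

import Mathlib

/-!
Since `|δ_j| ≤ u < 1`, every factor is positive and `∏ (1 + δ_j) = exp S` with
`S = ∑ log (1 + δ_j)`. The Taylor bound `|log (1 + x) - x| ≤ x² / (1 - u)` for `|x| ≤ u` gives
`|S| ≤ |∑ δ_j| + n u² / (1 - u)`, and `|exp S - 1| ≤ exp |S| - 1`.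
-/

open Finset Real

lemma abs_log_one_add_sub_self_le {x u : ℝ} (hx : |x| ≤ u) (hu : u < 1) :
    |log (1 + x) - x| ≤ x ^ 2 / (1 - u) := by
  have htaylor := abs_log_sub_add_sum_range_le (x := -x) (by rw [abs_neg]; linarith) 1
  simp only [range_one, sum_singleton, zero_add, pow_one, Nat.cast_zero, div_one, sub_neg_eq_add,
    abs_neg, sq_abs, Nat.reduceAdd] at htaylor
  calc |log (1 + x) - x| = |-x + log (1 + x)| := by rw [neg_add_eq_sub]
    _ ≤ x ^ 2 / (1 - |x|) := htaylor
    _ ≤ x ^ 2 / (1 - u) := div_le_div_of_nonneg_left (sq_nonneg x) (by linarith) (by linarith)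

lemma abs_exp_sub_one_le_exp_abs_sub_one (x : ℝ) : |exp x - 1| ≤ exp |x| - 1 := by
  rcases le_total 0 x with hx | hx
  · rw [abs_of_nonneg hx, abs_of_nonneg (by linarith [add_one_le_exp x])]
  · -- `1 - exp x = exp x * (exp (-x) - 1)` and `exp x ≤ 1`
    have hexp : exp x * exp (-x) = 1 := by rw [← exp_add, add_neg_cancel, exp_zero]
    rw [abs_of_nonpos hx, abs_of_nonpos (by linarith [exp_le_one_iff.2 hx])]
    nlinarith [exp_le_one_iff.2 hx, add_one_le_exp (-x), exp_pos x]

lemma prod_eq_exp_sum_log {ι : Type*} {s : Finset ι} {f : ι → ℝ} (hf : ∀ i ∈ s, 0 < f i) :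
    ∏ i ∈ s, f i = exp (∑ i ∈ s, log (f i)) := by
  rw [exp_sum]
  exact prod_congr rfl fun i hi => (exp_log (hf i hi)).symm

lemma abs_sum_log_one_add_sub_sum_le {ι : Type*} {s : Finset ι} {f : ι → ℝ} {u : ℝ}
    (hf : ∀ i ∈ s, |f i| ≤ u) (hu : u < 1) :
    |∑ i ∈ s, log (1 + f i) - ∑ i ∈ s, f i| ≤ #s * u ^ 2 / (1 - u) := by
  have hterm : ∀ i ∈ s, |log (1 + f i) - f i| ≤ u ^ 2 / (1 - u) := fun i hi =>
    (abs_log_one_add_sub_self_le (hf i hi) hu).trans <| div_le_div_of_nonneg_right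
      ((sq_abs _).symm.trans_le (pow_le_pow_left₀ (abs_nonneg _) (hf i hi) 2)) (by linarith)
  calc |∑ i ∈ s, log (1 + f i) - ∑ i ∈ s, f i|
      = |∑ i ∈ s, (log (1 + f i) - f i)| := by rw [sum_sub_distrib]
    _ ≤ ∑ i ∈ s, |log (1 + f i) - f i| := abs_sum_le_sum_abs _ _
    _ ≤ ∑ _i ∈ s, u ^ 2 / (1 - u) := sum_le_sum hterm
    _ = #s * u ^ 2 / (1 - u) := by rw [sum_const, nsmul_eq_mul, mul_div_assoc]

theorem abs_prod_one_add_sub_one_le {ι : Type*} {s : Finset ι} {f : ι → ℝ} {u : ℝ}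
    (hf : ∀ i ∈ s, |f i| ≤ u) (hu : u < 1) :
    |∏ i ∈ s, (1 + f i) - 1| ≤ exp (|∑ i ∈ s, f i| + #s * u ^ 2 / (1 - u)) - 1 := by
  have hpos : ∀ i ∈ s, 0 < 1 + f i := fun i hi => by linarith [neg_abs_le (f i), hf i hi]
  rw [prod_eq_exp_sum_log hpos]
  refine (abs_exp_sub_one_le_exp_abs_sub_one _).trans (sub_le_sub_right (exp_le_exp.2 ?_) 1)
  linarith [abs_sub_abs_le_abs_sub (∑ i ∈ s, log (1 + f i)) (∑ i ∈ s, f i),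
    abs_sum_log_one_add_sub_sum_le hf hu]

theorem product_perturbation_bound_with_sum_bound_general
    (n k : ℕ) (u lam : ℝ) (hu0 : 0 ≤ u) (hu1 : u < 1)
    (δ : ℕ → ℝ) (hδ : ∀ j ∈ Finset.Icc (k + 1) n, |δ j| ≤ u)
    (hsum : |∑ j ∈ Finset.Icc (k + 1) n, δ j| ≤ lam * Real.sqrt n * u) :
    |(∏ j ∈ Finset.Icc (k + 1) n, (1 + δ j)) - 1| ≤
      Real.exp ((lam * Real.sqrt n * u + n * u ^ 2) / (1 - u)) - 1 := by
  have hu : 0 < 1 - u := by linarith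
  have hcard : (#(Icc (k + 1) n) : ℝ) ≤ n := by
    rw [Nat.card_Icc]; exact_mod_cast (by omega : n + 1 - (k + 1) ≤ n)
  have hsum' : |∑ j ∈ Icc (k + 1) n, δ j| ≤ lam * √n * u / (1 - u) :=
    hsum.trans (le_div_self ((abs_nonneg _).trans hsum) hu (by linarith))
  refine (abs_prod_one_add_sub_one_le hδ hu1).trans (sub_le_sub_right (exp_le_exp.2 ?_) 1)
  rw [add_div]
  gcongr

theorem product_perturbation_bound_with_sum_bound
    (n k : ℕ) (hk : k ≤ n) (u lam : ℝ) (hu0 : 0 ≤ u) (hu1 : u < 1) (hlam : 0 ≤ lam)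
    (δ : ℕ → ℝ) (hδ : ∀ j ∈ Finset.Icc (k + 1) n, |δ j| ≤ u)
    (hsum : |∑ j ∈ Finset.Icc (k + 1) n, δ j| ≤ lam * Real.sqrt n * u) :
    |(∏ j ∈ Finset.Icc (k + 1) n, (1 + δ j)) - 1| ≤
      Real.exp ((lam * Real.sqrt n * u + n * u ^ 2) / (1 - u)) - 1 :=
  product_perturbation_bound_with_sum_bound_general n k u lam hu0 hu1 δ hδ hsum
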